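/- arXiv:1005.3045 — 4 statements merged into one kernel-verified Lean document; each statement's English description precedes it below -/
import Mathlib

section
/- If a finite group G acts on the finite game Γ, then Γ has a G-exchangeable equilibrium: the set XE_G(Γ) = CE(Γ) ∩ conv(Δ_G^Π(Γ)) is nonempty. -/
open Finset
open scoped Classical BigOperators

/-- The maximizer's utility in the auxiliary zero-sum game `Γ⁰` associated to the finite
game with strategy sets `C i` and utilities `u`.  The maximizer plays a strategy profile
`s`, the minimizer a pair `(rᵢ, tᵢ)` of strategies of some player `i`. -/
noncomputable def uM0 {I : Type*} [Fintype I] {C : I → Type*} [∀ i, Fintype (C i)]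
    (u : ∀ i : I, (∀ j, C j) → ℝ) (s : ∀ j, C j) : (Σ i : I, C i × C i) → ℝ :=
  fun p => if p.2.1 = s p.1 then u p.1 s - u p.1 (Function.update s p.1 p.2.2) else 0

/-- Correlated equilibria of the finite game with strategy sets `C i` and utilities `u`:
distributions `π` on profiles such that no player can gain by deviating from a
recommended strategy `sᵢ` to any `tᵢ`. -/
def CorrEq {I : Type*} [Fintype I] {C : I → Type*} [∀ i, Fintype (C i)]
    (u : ∀ i : I, (∀ j, C j) → ℝ) : Set ((∀ j, C j) → ℝ) :=
  {π | π ∈ stdSimplex ℝ (∀ j, C j) ∧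
    ∀ (i : I) (si ti : C i),
      ∑ s : ∀ j, C j,
        (if s i = si then (u i (Function.update s i ti) - u i s) * π s else 0) ≤ 0}

/-- The product (independent) distributions on strategy profiles. -/
def prodDists {I : Type*} [Fintype I] (C : I → Type*) [∀ i, Fintype (C i)] :
    Set ((∀ j, C j) → ℝ) :=
  {π | ∃ ρ : ∀ i, C i → ℝ, (∀ i, ρ i ∈ stdSimplex ℝ (C i)) ∧
        π = fun s => ∏ i, ρ i (s i)}

/-- An action of a group `G` on a finite game with player set `I`, strategy sets `C i`
and utilities `u`.  `actI` is the left action on players and `actS` the induced left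
action on strategy profiles; `diagonal` expresses that the coordinate `g·i` of `g·s`
depends only on the coordinate `i` of `s` (i.e. the profile action is induced by strategy
maps `g· : C i → C (g·i)`), and `utility_inv` is the utility compatibility condition
`u_{g·i}(g·s) = u_i(s)`. -/
structure GameAction (G : Type*) [Group G] {I : Type*} (C : I → Type*)
    (u : ∀ i : I, (∀ j, C j) → ℝ) where
  actI : G → I → I
  actS : G → (∀ j, C j) → (∀ j, C j)
  actI_one : ∀ i, actI 1 i = i
  actI_mul : ∀ g h i, actI (g * h) i = actI g (actI h i)
  actS_one : ∀ s, actS 1 s = s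
  actS_mul : ∀ g h s, actS (g * h) s = actS g (actS h s)
  diagonal : ∀ g s t i, s i = t i → actS g s (actI g i) = actS g t (actI g i)
  utility_inv : ∀ g i s, u (actI g i) (actS g s) = u i s


lemma isCompact_convexHull_of_isCompact {E : Type*} [NormedAddCommGroup E] [NormedSpace ℝ E]
    [FiniteDimensional ℝ E] {s : Set E} (hs : IsCompact s) : IsCompact (convexHull ℝ s) := by
  rcases s.eq_empty_or_nonempty with rfl | ⟨s₀, hs₀⟩
  · simpa [convexHull_empty] using isCompact_empty
  set n := Module.finrank ℝ E + 1 with hn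
  have himg : convexHull ℝ s =
      (fun p : (Fin n → ℝ) × (Fin n → E) => ∑ j, p.1 j • p.2 j) ''
        (stdSimplex ℝ (Fin n) ×ˢ Set.univ.pi fun _ => s) := by
    apply Set.Subset.antisymm
    · intro x hx
      obtain ⟨ι, hfin, z, w, hzs, hai, hw0, hw1, hxx⟩ :=
        eq_pos_convex_span_of_mem_convexHull hx
      have hcard : Fintype.card ι ≤ n := by
        refine le_trans hai.card_le_finrank_succ ?_
        have := Submodule.finrank_le (vectorSpan ℝ (Set.range z))
        omega
      obtain ⟨e⟩ : Nonempty (ι ↪ Fin n) :=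
        Function.Embedding.nonempty_of_card_le (by simpa using hcard)
      set w' : Fin n → ℝ := Function.extend e w 0 with hw'
      set z' : Fin n → E := Function.extend e z fun _ => s₀ with hz'
      have hsum : ∀ (F : ℝ → E → ℝ × E), (∀ b, F 0 b = 0) →
          ∑ j, F (w' j) (z' j) = ∑ i, F (w i) (z i) := by
        intro F hF0
        calc ∑ j : Fin n, F (w' j) (z' j)
            = ∑ j ∈ Finset.univ.image e, F (w' j) (z' j) := by
              refine (Finset.sum_subset (Finset.subset_univ _) ?_).symm
              intro j _ hj
              have : w' j = 0 := by
                rw [hw', Function.extend_apply']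
                · rfl
                · rintro ⟨i, rfl⟩
                  exact hj (Finset.mem_image.2 ⟨i, Finset.mem_univ _, rfl⟩)
              rw [this, hF0]
          _ = ∑ i, F (w' (e i)) (z' (e i)) :=
              Finset.sum_image (fun a _ b _ h => e.injective h)
          _ = ∑ i, F (w i) (z i) := by
              refine Finset.sum_congr rfl fun i _ => ?_
              rw [hw', hz', e.injective.extend_apply, e.injective.extend_apply]
      refine ⟨(w', z'), ⟨⟨?_, ?_⟩, ?_⟩, ?_⟩
      · intro j
        show 0 ≤ w' j
        rw [hw']
        rcases em (∃ i, e i = j) with ⟨i, rfl⟩ | h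
        · rw [e.injective.extend_apply]; exact (hw0 i).le
        · rw [Function.extend_apply' _ _ _ h]; exact le_refl 0
      · show ∑ j, w' j = 1
        have h := hsum (fun a b => (a, a • b)) (fun b => by simp)
        have := congrArg Prod.fst h
        rw [Prod.fst_sum, Prod.fst_sum] at this
        simpa using this.trans hw1
      · intro j _
        show z' j ∈ s
        rw [hz']
        rcases em (∃ i, e i = j) with ⟨i, rfl⟩ | h
        · rw [e.injective.extend_apply]; exact hzs (Set.mem_range_self i)
        · rw [Function.extend_apply' _ _ _ h]; exact hs₀
      · show ∑ j, w' j • z' j = x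
        have h := hsum (fun a b => (a, a • b)) (fun b => by simp)
        have := congrArg Prod.snd h
        rw [Prod.snd_sum, Prod.snd_sum] at this
        simpa using this.trans hxx
    · rintro x ⟨⟨wv, zv⟩, ⟨hw, hz⟩, rfl⟩
      have := Finset.centerMass_mem_convexHull (Finset.univ : Finset (Fin n))
        (w := wv) (z := zv) (fun i _ => hw.1 i) (by rw [hw.2]; norm_num)
        (fun i _ => hz i (Set.mem_univ i))
      rwa [Finset.centerMass, hw.2, inv_one, one_smul] at this
  rw [himg]
  refine (IsCompact.image ?_ ?_)
  · exact (isCompact_stdSimplex ℝ _).prod (isCompact_univ_pi fun _ => hs)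
  · refine continuous_finset_sum _ fun j _ => ?_
    exact ((continuous_apply j).comp continuous_fst).smul
      ((continuous_apply j).comp continuous_snd)


lemma clm_pi_repr {J : Type*} [Fintype J] (f : ((J → ℝ) →L[ℝ] ℝ)) (w : J → ℝ) :
    f w = ∑ j, w j * f (Pi.single j 1) := by
  have hw : w = ∑ j, w j • (Pi.single j (1 : ℝ) : J → ℝ) := by
    funext k
    rw [Finset.sum_apply]
    simp [Pi.single_apply]
  conv_lhs => rw [hw]
  rw [map_sum]
  simp [smul_eq_mul]

lemma sep_pos {J : Type*} [Fintype J] [Nonempty J] (K : Set (J → ℝ))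
    (hconv : Convex ℝ K) (hcomp : IsCompact K)
    (hdisj : ∀ v ∈ K, ∃ j, 0 < v j) :
    ∃ y : J → ℝ, (∀ j, 0 ≤ y j) ∧ ∑ j, y j = 1 ∧ ∀ v ∈ K, 0 < ∑ j, y j * v j := by
  set T : Set (J → ℝ) := {v | ∀ j, v j ≤ 0} with hT
  have hT_conv : Convex ℝ T := by
    have : T = Set.pi Set.univ fun _ : J => Set.Iic (0:ℝ) := by
      ext v; simp only [hT, Set.mem_setOf_eq, Set.mem_pi, Set.mem_univ, Set.mem_Iic, forall_const]
    rw [this]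
    exact convex_pi fun _ _ => convex_Iic 0
  have hT_closed : IsClosed T := by
    have : T = ⋂ j, {v : J → ℝ | v j ≤ 0} := by
      ext v; simp [hT, Set.mem_iInter]
    rw [this]
    exact isClosed_iInter fun j => isClosed_le (continuous_apply j) continuous_const
  have hdisj' : Disjoint K T := by
    rw [Set.disjoint_left]
    intro v hvK hvT
    obtain ⟨j, hj⟩ := hdisj v hvK
    exact absurd (hvT j) (not_le.2 hj)
  obtain ⟨f, a, b, hfK, hab, hfT⟩ :=
    geometric_hahn_banach_compact_closed hconv hcomp hT_conv hT_closed hdisj'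
  have h0T : (0 : J → ℝ) ∈ T := fun j => le_refl 0
  have hb0 : b < 0 := by simpa using hfT 0 h0T
  have hfT_nonneg : ∀ v ∈ T, 0 ≤ f v := by
    intro v hv
    by_contra hneg
    push_neg at hneg
    have hc : 0 < b / f v := div_pos_of_neg_of_neg hb0 hneg
    have hmem : (b / f v) • v ∈ T := fun j => by
      have := hv j
      have : (b / f v) * v j ≤ 0 := mul_nonpos_iff.2 (Or.inl ⟨hc.le, this⟩)
      simpa using this
    have := hfT _ hmem
    rw [map_smul, smul_eq_mul, div_mul_cancel₀ _ (ne_of_lt hneg)] at this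
    exact lt_irrefl b this
  set y : J → ℝ := fun j => -f (Pi.single j 1) with hy
  have hy0 : ∀ j, 0 ≤ y j := by
    intro j
    have hmem : (Pi.single j (-1) : J → ℝ) ∈ T := by
      intro k
      rcases eq_or_ne k j with rfl | hkj
      · simp
      · simp [Pi.single_apply, hkj]
    have := hfT_nonneg _ hmem
    have heq : (Pi.single j (-1) : J → ℝ) = -Pi.single j 1 := by
      funext k; by_cases hkj : k = j <;> simp [Pi.single_apply, hkj]
    rw [heq, map_neg] at this
    simpa [hy] using this
  have hKpos : ∀ v ∈ K, 0 < ∑ j, y j * v j := by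
    intro v hv
    have h1 : f v < 0 := lt_trans (lt_trans (hfK v hv) hab) hb0
    have h2 : f v = ∑ j, v j * f (Pi.single j 1) := clm_pi_repr f v
    have : ∑ j, y j * v j = -f v := by
      rw [h2, ← Finset.sum_neg_distrib]
      exact Finset.sum_congr rfl fun j _ => by simp [hy]; ring
    rw [this]
    linarith
  rcases K.eq_empty_or_nonempty with rfl | ⟨v₀, hv₀⟩
  · refine ⟨fun _ => (Fintype.card J : ℝ)⁻¹, fun _ => by positivity, ?_, by simp⟩
    have hpos : (0:ℝ) < Fintype.card J := by
      have := Fintype.card_pos (α := J)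
      exact_mod_cast this
    rw [Finset.sum_const, Finset.card_univ, nsmul_eq_mul]
    field_simp
  have htot : 0 < ∑ j, y j := by
    by_contra h
    push_neg at h
    have : ∑ j, y j = 0 := le_antisymm h (Finset.sum_nonneg fun j _ => hy0 j)
    have hzero : ∀ j, y j = 0 := by
      intro j
      exact (Finset.sum_eq_zero_iff_of_nonneg (fun j _ => hy0 j)).1 this j (Finset.mem_univ j)
    have := hKpos v₀ hv₀
    simp [hzero] at this
  refine ⟨fun j => y j / ∑ k, y k, fun j => div_nonneg (hy0 j) htot.le, ?_, ?_⟩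
  · rw [← Finset.sum_div, div_self (ne_of_gt htot)]
  · intro v hv
    have := hKpos v hv
    have : ∑ j, y j / (∑ k, y k) * v j = (∑ j, y j * v j) / ∑ k, y k := by
      rw [Finset.sum_div]
      exact Finset.sum_congr rfl fun j _ => by ring
    rw [this]
    positivity


lemma clm_pi_repr' {J : Type*} [Fintype J] (f : ((J → ℝ) →L[ℝ] ℝ)) (w : J → ℝ) :
    f w = ∑ j, w j * f (Pi.single j 1) := by
  have hw : w = ∑ j, w j • (Pi.single j (1 : ℝ) : J → ℝ) := by
    funext k
    rw [Finset.sum_apply]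
    simp [Pi.single_apply]
  conv_lhs => rw [hw]
  rw [map_sum]
  simp [smul_eq_mul]

lemma stationary_exists {S : Type*} [Fintype S] [Nonempty S] (P : S → S → ℝ)
    (h0 : ∀ r t, 0 ≤ P r t) (h1 : ∀ r, ∑ t, P r t = 1) :
    ∃ ρ : S → ℝ, ρ ∈ stdSimplex ℝ S ∧ ∀ t, ∑ r, ρ r * P r t = ρ t := by
  set L : (S → ℝ) →ₗ[ℝ] (S → ℝ) :=
    { toFun := fun ρ => fun t => (∑ r, ρ r * P r t) - ρ t
      map_add' := by
        intro ρ σ; funext t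
        simp only [Pi.add_apply, add_mul, Finset.sum_add_distrib]
        ring
      map_smul' := by
        intro c ρ; funext t
        simp only [Pi.smul_apply, smul_eq_mul, RingHom.id_apply, mul_sub, Finset.mul_sum,
          mul_assoc] } with hL
  set K : Set (S → ℝ) := L '' stdSimplex ℝ S with hK
  by_cases h0K : (0 : S → ℝ) ∈ K
  · obtain ⟨ρ, hρ, hLρ⟩ := h0K
    refine ⟨ρ, hρ, fun t => ?_⟩
    have := congrFun hLρ t
    simp only [hL, LinearMap.coe_mk, AddHom.coe_mk, Pi.zero_apply] at this
    linarith
  exfalso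
  have hKconv : Convex ℝ K := (convex_stdSimplex ℝ S).linear_image L
  have hKcomp : IsCompact K :=
    (isCompact_stdSimplex ℝ S).image L.continuous_of_finiteDimensional
  have hKclosed : IsClosed K := hKcomp.isClosed
  obtain ⟨f, a, hfK, hf0⟩ :=
    geometric_hahn_banach_closed_point hKconv hKclosed h0K
  -- hfK : ∀ v ∈ K, f v < a;  hf0 : a < f 0 = 0
  have ha0 : a < 0 := by simpa using hf0
  set y : S → ℝ := fun t => f (Pi.single t 1) with hy
  obtain ⟨r₀, _, hr₀⟩ := Finset.exists_min_image Finset.univ y ⟨Classical.arbitrary S, Finset.mem_univ _⟩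
  have hmem : L (Pi.single r₀ 1) ∈ K := ⟨Pi.single r₀ 1, by
    constructor
    · intro t; by_cases h : t = r₀ <;> simp [Pi.single_apply, h]
    · simp [Pi.single_apply], rfl⟩
  have hval : f (L (Pi.single r₀ 1)) = ∑ t, P r₀ t * y t - y r₀ := by
    rw [clm_pi_repr' f (L (Pi.single r₀ 1))]
    have hLsingle : ∀ t, L (Pi.single r₀ 1) t = P r₀ t - (if t = r₀ then 1 else 0) := by
      intro t
      simp only [hL, LinearMap.coe_mk, AddHom.coe_mk]
      congr 1
      · rw [Finset.sum_eq_single r₀]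
        · simp
        · intro r _ hr; simp [Pi.single_apply, hr]
        · intro h; exact absurd (Finset.mem_univ r₀) h
      · simp [Pi.single_apply]
    have : ∀ t, L (Pi.single r₀ 1) t * f (Pi.single t 1)
        = P r₀ t * y t - (if t = r₀ then 1 else 0) * y t := by
      intro t; rw [hLsingle t, hy]; ring
    rw [Finset.sum_congr rfl fun t _ => this t]
    rw [Finset.sum_sub_distrib]
    congr 1
    rw [Finset.sum_eq_single r₀]
    · simp
    · intro r _ hr; simp [hr]
    · intro h; exact absurd (Finset.mem_univ r₀) h
  have hge : 0 ≤ f (L (Pi.single r₀ 1)) := by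
    rw [hval]
    have : y r₀ = ∑ t, P r₀ t * y r₀ := by
      rw [← Finset.sum_mul, h1 r₀, one_mul]
    rw [this]
    rw [← Finset.sum_sub_distrib]
    refine Finset.sum_nonneg fun t _ => ?_
    have := hr₀ t (Finset.mem_univ t)
    nlinarith [h0 r₀ t, hr₀ t (Finset.mem_univ t)]
  have := hfK _ hmem
  linarith

lemma sigma_pair_ext {I : Type*} {C : I → Type*} {x y : I} {b c : C x} {b' c' : C y}
    (h1 : (⟨x, b⟩ : Σ i, C i) = ⟨y, b'⟩) (h2 : (⟨x, c⟩ : Σ i, C i) = ⟨y, c'⟩) :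
    (⟨x, (b, c)⟩ : Σ i, C i × C i) = ⟨y, (b', c')⟩ := by
  obtain ⟨hxy, hb⟩ := Sigma.mk.inj_iff.1 h1
  subst hxy
  obtain ⟨-, hc⟩ := Sigma.mk.inj_iff.1 h2
  rw [eq_of_heq hb, eq_of_heq hc]

namespace GameAction
variable {G : Type*} [Group G] {I : Type*} {C : I → Type*} {u : ∀ i : I, (∀ j, C j) → ℝ}
variable (A : GameAction G C u)

lemma actS_inv_act (g : G) (s : ∀ j, C j) : A.actS g⁻¹ (A.actS g s) = s := by
  rw [← A.actS_mul, inv_mul_cancel, A.actS_one]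

lemma actS_act_inv (g : G) (s : ∀ j, C j) : A.actS g (A.actS g⁻¹ s) = s := by
  rw [← A.actS_mul, mul_inv_cancel, A.actS_one]

lemma actI_inv_act (g : G) (i : I) : A.actI g⁻¹ (A.actI g i) = i := by
  rw [← A.actI_mul, inv_mul_cancel, A.actI_one]

lemma actI_act_inv (g : G) (i : I) : A.actI g (A.actI g⁻¹ i) = i := by
  rw [← A.actI_mul, mul_inv_cancel, A.actI_one]

lemma actS_bijective (g : G) : Function.Bijective (A.actS g) :=
  ⟨fun s t h => by rw [← A.actS_inv_act g s, h, A.actS_inv_act],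
   fun s => ⟨A.actS g⁻¹ s, A.actS_act_inv g s⟩⟩

lemma actI_bijective (g : G) : Function.Bijective (A.actI g) :=
  ⟨fun i j h => by rw [← A.actI_inv_act g i, h, A.actI_inv_act],
   fun i => ⟨A.actI g⁻¹ i, A.actI_act_inv g i⟩⟩

/-- The induced action on individual strategies. -/
noncomputable def sAct (base : ∀ j, C j) (g : G) (i : I) (a : C i) : C (A.actI g i) :=
  A.actS g (Function.update base i a) (A.actI g i)

lemma actS_apply_actI (base : ∀ j, C j) (g : G) (s : ∀ j, C j) (i : I) :
    A.actS g s (A.actI g i) = A.sAct base g i (s i) :=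
  A.diagonal g s (Function.update base i (s i)) i (Function.update_self i (s i) base).symm

lemma sAct_injective (base : ∀ j, C j) (g : G) (i : I) :
    Function.Injective (A.sAct base g i) := by
  intro a b hab
  have h3 := A.diagonal g⁻¹ _ _ (A.actI g i) hab
  rw [A.actS_inv_act, A.actS_inv_act, A.actI_inv_act] at h3
  simpa using h3

lemma sAct_surjective (base : ∀ j, C j) (g : G) (i : I) :
    Function.Surjective (A.sAct base g i) := by
  intro b
  set t := Function.update (A.actS g base) (A.actI g i) b with ht
  refine ⟨A.actS g⁻¹ t i, ?_⟩
  have h1 : A.actS g (Function.update base i (A.actS g⁻¹ t i)) (A.actI g i)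
      = A.actS g (A.actS g⁻¹ t) (A.actI g i) :=
    A.diagonal g _ _ i (by simp)
  show A.actS g (Function.update base i (A.actS g⁻¹ t i)) (A.actI g i) = b
  rw [h1, A.actS_act_inv, ht, Function.update_self]

lemma sAct_bijective (base : ∀ j, C j) (g : G) (i : I) :
    Function.Bijective (A.sAct base g i) :=
  ⟨A.sAct_injective base g i, A.sAct_surjective base g i⟩

lemma sAct_mul (base : ∀ j, C j) (g h : G) (i : I) (a : C i) :
    (⟨A.actI (g*h) i, A.sAct base (g*h) i a⟩ : Σ i, C i)
      = ⟨A.actI g (A.actI h i), A.sAct base g (A.actI h i) (A.sAct base h i a)⟩ := by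
  have h2 : A.sAct base g (A.actI h i) (A.sAct base h i a)
      = A.actS g (A.actS h (Function.update base i a)) (A.actI g (A.actI h i)) := by
    refine A.diagonal g _ _ (A.actI h i) ?_
    have h3 := A.actS_apply_actI base h (Function.update base i a) i
    rw [Function.update_self] at h3
    rw [Function.update_self, h3]
  have h1 : A.sAct base (g*h) i a
      = A.actS g (A.actS h (Function.update base i a)) (A.actI (g*h) i) := by
    show A.actS (g*h) (Function.update base i a) (A.actI (g*h) i) = _
    rw [A.actS_mul]
  rw [h1, h2]
  exact congrArg
    (fun x : I =>
      (⟨x, A.actS g (A.actS h (Function.update base i a)) x⟩ : Σ i, C i))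
    (A.actI_mul g h i)

lemma actS_update (base : ∀ j, C j) (g : G) (s : ∀ j, C j) (i : I) (t : C i) :
    A.actS g (Function.update s i t)
      = Function.update (A.actS g s) (A.actI g i) (A.sAct base g i t) := by
  funext j'
  obtain ⟨k, rfl⟩ := (A.actI_bijective g).2 j'
  by_cases hk : k = i
  · subst hk
    rw [Function.update_self, A.actS_apply_actI base, Function.update_self]
  · have hne : A.actI g k ≠ A.actI g i := fun hh => hk ((A.actI_bijective g).1 hh)
    rw [Function.update_of_ne hne, A.actS_apply_actI base, A.actS_apply_actI base,
      Function.update_of_ne hk]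

/-- The induced action on triples (player, pair of strategies). -/
noncomputable def jAct (base : ∀ j, C j) (g : G) :
    (Σ i : I, C i × C i) → (Σ i : I, C i × C i) :=
  fun j => ⟨A.actI g j.1, (A.sAct base g j.1 j.2.1, A.sAct base g j.1 j.2.2)⟩

lemma jAct_injective (base : ∀ j, C j) (g : G) : Function.Injective (A.jAct base g) := by
  rintro ⟨i, r, t⟩ ⟨i', r', t'⟩ hj
  obtain ⟨h1, h2⟩ := Sigma.mk.inj_iff.1 hj
  obtain rfl : i = i' := (A.actI_bijective g).1 h1
  have h2' : (A.sAct base g i r, A.sAct base g i t) = (A.sAct base g i r', A.sAct base g i t') :=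
    eq_of_heq h2
  obtain ⟨hr, ht⟩ := Prod.ext_iff.1 h2'
  obtain rfl := A.sAct_injective base g i hr
  obtain rfl := A.sAct_injective base g i ht
  rfl

lemma jAct_mul (base : ∀ j, C j) (g h : G) (j : Σ i : I, C i × C i) :
    A.jAct base (g*h) j = A.jAct base g (A.jAct base h j) := by
  rcases j with ⟨i, r, t⟩
  exact sigma_pair_ext (A.sAct_mul base g h i r) (A.sAct_mul base g h i t)

end GameAction

/-- A game with a finite symmetry group `G` has a `G`-exchangeable equilibrium:
a correlated equilibrium in the convex hull of the `G`-invariant product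
distributions. -/
theorem exchangeable_equilibrium_exists
    {G : Type*} [Group G] [Fintype G]
    {I : Type*} [Fintype I] {C : I → Type*} [∀ i, Fintype (C i)]
    (hI : 2 ≤ Fintype.card I) (hC : ∀ i, 2 ≤ Fintype.card (C i))
    (u : ∀ i : I, (∀ j, C j) → ℝ) (A : GameAction G C u) :
    (CorrEq u ∩
      convexHull ℝ
        {π | π ∈ prodDists C ∧ ∀ g : G, (fun s => π (A.actS g s)) = π}).Nonempty := by
  classical
  have hCne : ∀ i, Nonempty (C i) := fun i => Fintype.card_pos_iff.1 (by have := hC i; omega)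
  have hIne : Nonempty I := Fintype.card_pos_iff.1 (by omega)
  obtain ⟨i₀⟩ := hIne
  set base : ∀ j, C j := fun j => (hCne j).some with hbase
  haveI : ∀ i, Nonempty (C i) := hCne
  haveI : Nonempty I := ⟨i₀⟩
  set S' : Set ((∀ j, C j) → ℝ) :=
    {π | π ∈ prodDists C ∧ ∀ g : G, (fun s => π (A.actS g s)) = π} with hS'
  set X : Set ((∀ j, C j) → ℝ) := convexHull ℝ S' with hX
  -- product distributions lie in the standard simplex
  have hprod_simplex : ∀ ρ : ∀ i, C i → ℝ, (∀ i, ρ i ∈ stdSimplex ℝ (C i)) →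
      (fun s => ∏ i, ρ i (s i)) ∈ stdSimplex ℝ (∀ j, C j) := by
    intro ρ hρ
    constructor
    · intro s
      exact Finset.prod_nonneg fun i _ => (hρ i).1 (s i)
    · rw [← Fintype.prod_sum ρ]
      rw [Finset.prod_congr rfl fun i _ => (hρ i).2]
      simp
  have hS'_simplex : S' ⊆ stdSimplex ℝ (∀ j, C j) := by
    rintro π ⟨⟨ρ, hρ, rfl⟩, -⟩
    exact hprod_simplex ρ hρ
  have hX_simplex : X ⊆ stdSimplex ℝ (∀ j, C j) :=
    convexHull_min hS'_simplex (convex_stdSimplex ℝ _)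
  -- invariance
  have hX_inv : ∀ π ∈ X, ∀ (g : G) s, π (A.actS g s) = π s := by
    have hconv : Convex ℝ {π : (∀ j, C j) → ℝ | ∀ (g : G) s, π (A.actS g s) = π s} := by
      intro x hx y hy a b ha hb hab g s
      simp only [Pi.add_apply, Pi.smul_apply, smul_eq_mul, hx g s, hy g s]
    have hsub : S' ⊆ {π : (∀ j, C j) → ℝ | ∀ (g : G) s, π (A.actS g s) = π s} := by
      rintro π ⟨-, hπ⟩ g s
      exact congrFun (hπ g) s
    exact fun π hπ => convexHull_min hsub hconv hπ
  -- compactness of X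
  have hS'_compact : IsCompact S' := by
    have h1 : IsCompact (prodDists C) := by
      have : prodDists C = (fun (ρ : ∀ i, C i → ℝ) => fun s => ∏ i, ρ i (s i)) ''
          Set.pi Set.univ (fun i => stdSimplex ℝ (C i)) := by
        ext π
        constructor
        · rintro ⟨ρ, hρ, rfl⟩
          exact ⟨ρ, fun i _ => hρ i, rfl⟩
        · rintro ⟨ρ, hρ, rfl⟩
          exact ⟨ρ, fun i => hρ i (Set.mem_univ i), rfl⟩
      rw [this]
      refine (isCompact_univ_pi fun i => isCompact_stdSimplex ℝ (C i)).image ?_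
      refine continuous_pi fun s => ?_
      exact continuous_finset_prod _ fun i _ =>
        (continuous_apply (s i)).comp (continuous_apply i)
    have h2 : IsClosed {π : (∀ j, C j) → ℝ | ∀ g : G, (fun s => π (A.actS g s)) = π} := by
      have : {π : (∀ j, C j) → ℝ | ∀ g : G, (fun s => π (A.actS g s)) = π}
          = ⋂ (g : G), ⋂ (s : ∀ j, C j), {π : (∀ j, C j) → ℝ | π (A.actS g s) = π s} := by
        ext π
        simp only [Set.mem_setOf_eq, Set.mem_iInter, funext_iff]
      rw [this]
      exact isClosed_iInter fun g => isClosed_iInter fun s =>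
        isClosed_eq (continuous_apply _) (continuous_apply _)
    exact h1.inter_right h2
  have hX_compact : IsCompact X := isCompact_convexHull_of_isCompact hS'_compact
  have hX_convex : Convex ℝ X := convex_convexHull ℝ S'
  -- the deviation-gain functionals
  set J := Σ i : I, C i × C i with hJ
  haveI : Nonempty J := ⟨⟨i₀, (base i₀, base i₀)⟩⟩
  set D : J → ((∀ j, C j) → ℝ) → ℝ := fun j π =>
    ∑ s, (if s j.1 = j.2.1 then u j.1 (Function.update s j.1 j.2.2) - u j.1 s else 0) * π s
    with hD
  set Dlin : ((∀ j, C j) → ℝ) →ₗ[ℝ] (J → ℝ) :=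
    { toFun := fun π => fun j => D j π
      map_add' := by
        intro π σ; funext j
        simp only [hD, Pi.add_apply, mul_add, Finset.sum_add_distrib]
      map_smul' := by
        intro c π; funext j
        simp only [hD, Pi.smul_apply, smul_eq_mul, RingHom.id_apply, Finset.mul_sum]
        exact Finset.sum_congr rfl fun s _ => by ring } with hDlin
  -- CorrEq in terms of D
  have hD_corr : ∀ π, π ∈ stdSimplex ℝ (∀ j, C j) → π ∉ CorrEq u → ∃ j : J, 0 < D j π := by
    intro π hπ hne
    rw [CorrEq, Set.mem_setOf_eq, not_and] at hne
    have h2 := hne hπ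
    push_neg at h2
    obtain ⟨i, si, ti, hlt⟩ := h2
    refine ⟨⟨i, (si, ti)⟩, ?_⟩
    have heq : ∀ s : ∀ j, C j,
        (if s i = si then (u i (Function.update s i ti) - u i s) * π s else 0)
          = (if s i = si then u i (Function.update s i ti) - u i s else 0) * π s := by
      intro s; split <;> simp
    calc (0:ℝ) < ∑ s, (if s i = si then (u i (Function.update s i ti) - u i s) * π s else 0) :=
          hlt
      _ = D ⟨i, (si, ti)⟩ π := Finset.sum_congr rfl fun s _ => heq s
  -- by contradiction
  by_contra hempty
  rw [Set.not_nonempty_iff_eq_empty] at hempty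
  have hno : ∀ π ∈ X, ∃ j : J, 0 < D j π := by
    intro π hπ
    refine hD_corr π (hX_simplex hπ) fun hce => ?_
    have : π ∈ CorrEq u ∩ X := ⟨hce, hπ⟩
    rw [hempty] at this
    exact absurd this (Set.notMem_empty π)
  -- separation
  obtain ⟨y, hy0, hy1, hypos⟩ := sep_pos (Dlin '' X)
    (hX_convex.linear_image Dlin)
    (hX_compact.image Dlin.continuous_of_finiteDimensional)
    (by rintro v ⟨π, hπ, rfl⟩; exact hno π hπ)
  have hypos' : ∀ π ∈ X, 0 < ∑ j, y j * D j π := by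
    intro π hπ
    have := hypos (Dlin π) (Set.mem_image_of_mem _ hπ)
    simpa [hDlin] using this
  -- invariance of D under the action, for invariant π
  have hDinv : ∀ (g : G) (j : J) (π : (∀ j, C j) → ℝ),
      (∀ s, π (A.actS g s) = π s) → D (A.jAct base g j) π = D j π := by
    rintro g ⟨i, r, t⟩ π hπinv
    show D ⟨A.actI g i, (A.sAct base g i r, A.sAct base g i t)⟩ π = D ⟨i, (r, t)⟩ π
    simp only [hD]
    refine (Fintype.sum_bijective (A.actS g) (A.actS_bijective g) _ _ ?_).symm
    intro s
    rw [A.actS_apply_actI base g s i]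
    by_cases hc : s i = r
    · rw [if_pos hc, if_pos (congrArg (A.sAct base g i) hc)]
      rw [← A.actS_update base g s i t, A.utility_inv, A.utility_inv, hπinv s]
    · rw [if_neg hc, if_neg (fun hh => hc (A.sAct_injective base g i hh)), zero_mul, zero_mul]
  -- the symmetrized minimizer strategy
  set ybar : J → ℝ := fun j => (∑ g : G, y (A.jAct base g j)) / (Fintype.card G) with hybar
  have hcardG : (0:ℝ) < Fintype.card G := by
    have := Fintype.card_pos (α := G); exact_mod_cast this
  have hjbij : ∀ g : G, Function.Bijective (A.jAct base g) := fun g =>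
    Finite.injective_iff_bijective.1 (A.jAct_injective base g)
  have hybar0 : ∀ j, 0 ≤ ybar j :=
    fun j => div_nonneg (Finset.sum_nonneg fun g _ => hy0 _) hcardG.le
  have hybar_inv : ∀ (g : G) (j : J), ybar (A.jAct base g j) = ybar j := by
    intro g j
    simp only [hybar]
    congr 1
    calc ∑ h : G, y (A.jAct base h (A.jAct base g j))
        = ∑ h : G, y (A.jAct base (h * g) j) :=
          Finset.sum_congr rfl fun h _ => by rw [A.jAct_mul]
      _ = ∑ h : G, y (A.jAct base h j) :=
          Fintype.sum_equiv (Equiv.mulRight g) _ _ fun h => rfl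
  have hybar_sum : ∑ j, ybar j = 1 := by
    simp only [hybar]
    rw [← Finset.sum_div, Finset.sum_comm]
    have : ∀ g : G, ∑ j, y (A.jAct base g j) = 1 := by
      intro g
      rw [Fintype.sum_bijective (A.jAct base g) (hjbij g) _ _ fun j => rfl]
      exact hy1
    rw [Finset.sum_congr rfl fun g _ => this g]
    rw [Finset.sum_const, Finset.card_univ, nsmul_eq_mul, mul_one]
    field_simp
  have hybar_pos : ∀ π ∈ X, 0 < ∑ j, ybar j * D j π := by
    intro π hπ
    have hinv := hX_inv π hπ
    have hcalc : ∑ j, ybar j * D j π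
        = (∑ g : G, ∑ j, y (A.jAct base g j) * D j π) / Fintype.card G := by
      calc ∑ j, ybar j * D j π
          = ∑ j, (∑ g : G, y (A.jAct base g j) * D j π) / Fintype.card G := by
            refine Finset.sum_congr rfl fun j _ => ?_
            simp only [hybar]
            rw [div_mul_eq_mul_div, Finset.sum_mul]
        _ = (∑ j, ∑ g : G, y (A.jAct base g j) * D j π) / Fintype.card G := by
            rw [Finset.sum_div]
        _ = (∑ g : G, ∑ j, y (A.jAct base g j) * D j π) / Fintype.card G := by
            rw [Finset.sum_comm]
    rw [hcalc]
    have hterm : ∀ g : G, ∑ j, y (A.jAct base g j) * D j π = ∑ j, y j * D j π := by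
      intro g
      refine Fintype.sum_bijective (A.jAct base g) (hjbij g) _ _ fun j => ?_
      rw [hDinv g j π (hinv g)]
    rw [Finset.sum_congr rfl fun g _ => hterm g]
    rw [Finset.sum_const, Finset.card_univ, nsmul_eq_mul]
    exact div_pos (mul_pos hcardG (hypos' π hπ)) hcardG
  -- Markov transition matrices
  set b : ∀ i, C i → ℝ := fun i r => ∑ t, ybar ⟨i, (r, t)⟩ with hb
  have hybar_total : ∑ i : I, ∑ p : C i × C i, ybar ⟨i, p⟩ = 1 := by
    rw [← hybar_sum, ← Finset.univ_sigma_univ, Finset.sum_sigma]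
  have hb_le : ∀ i (r : C i), b i r ≤ 1 := by
    intro i r
    simp only [hb]
    rw [← hybar_total]
    calc ∑ t, ybar ⟨i, (r, t)⟩
        ≤ ∑ p : C i × C i, ybar ⟨i, p⟩ := by
          rw [Fintype.sum_prod_type]
          refine Finset.single_le_sum (f := fun r' => ∑ t, ybar ⟨i, (r', t)⟩) ?_ (Finset.mem_univ r)
          exact fun r' _ => Finset.sum_nonneg fun t _ => hybar0 _
      _ ≤ ∑ i : I, ∑ p : C i × C i, ybar ⟨i, p⟩ :=
          Finset.single_le_sum (f := fun i' => ∑ p : C i' × C i', ybar ⟨i', p⟩)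
            (fun i' _ => Finset.sum_nonneg fun p _ => hybar0 _) (Finset.mem_univ i)
  set P : ∀ i, C i → C i → ℝ :=
    fun i r t => ybar ⟨i, (r, t)⟩ + (if r = t then 1 - b i r else 0) with hP
  have hP0 : ∀ i (r t : C i), 0 ≤ P i r t := by
    intro i r t
    simp only [hP]
    by_cases h : r = t
    · rw [if_pos h]
      have := hb_le i r
      have := hybar0 (⟨i, (r, t)⟩ : J)
      linarith
    · rw [if_neg h, add_zero]
      exact hybar0 _
  have hP1 : ∀ i (r : C i), ∑ t, P i r t = 1 := by
    intro i r
    simp only [hP]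
    rw [Finset.sum_add_distrib]
    have h1 : ∑ t, ybar ⟨i, (r, t)⟩ = b i r := by simp only [hb]
    have h2 : ∑ t, (if r = t then 1 - b i r else 0) = 1 - b i r := by
      rw [Finset.sum_ite_eq]
      simp
    rw [h1, h2]
    ring
  have hPequi : ∀ (g : G) i (r t : C i),
      P (A.actI g i) (A.sAct base g i r) (A.sAct base g i t) = P i r t := by
    intro g i r t
    have hyb : ybar ⟨A.actI g i, (A.sAct base g i r, A.sAct base g i t)⟩ = ybar ⟨i, (r, t)⟩ :=
      hybar_inv g ⟨i, (r, t)⟩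
    have hbe : b (A.actI g i) (A.sAct base g i r) = b i r := by
      simp only [hb]
      refine (Fintype.sum_bijective (A.sAct base g i) (A.sAct_bijective base g i) _ _ ?_).symm
      intro t'
      exact (hybar_inv g ⟨i, (r, t')⟩).symm
    simp only [hP]
    rw [hyb, hbe]
    congr 1
    by_cases h : r = t
    · rw [if_pos h, if_pos (congrArg (A.sAct base g i) h)]
    · rw [if_neg h, if_neg fun hh => h (A.sAct_injective base g i hh)]
  -- stationary distributions
  have hstat : ∀ i, ∃ ρ : C i → ℝ, ρ ∈ stdSimplex ℝ (C i) ∧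
      ∀ t, ∑ r, ρ r * P i r t = ρ t := fun i => stationary_exists (P i) (hP0 i) (hP1 i)
  choose ρ₀ hρ₀mem hρ₀stat using hstat
  -- symmetrized product distribution
  set ρ' : ∀ i, C i → ℝ :=
    fun i a => (∑ g : G, ρ₀ (A.actI g i) (A.sAct base g i a)) / (Fintype.card G) with hρ'
  have hρ'equi : ∀ (g : G) i (a : C i), ρ' (A.actI g i) (A.sAct base g i a) = ρ' i a := by
    intro g i a
    simp only [hρ']
    congr 1
    calc ∑ h : G, ρ₀ (A.actI h (A.actI g i)) (A.sAct base h (A.actI g i) (A.sAct base g i a))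
        = ∑ h : G, ρ₀ (A.actI (h * g) i) (A.sAct base (h * g) i a) := by
          refine Finset.sum_congr rfl fun h _ => ?_
          exact (congrArg (fun p : Σ i, C i => ρ₀ p.1 p.2) (A.sAct_mul base h g i a)).symm
      _ = ∑ h : G, ρ₀ (A.actI h i) (A.sAct base h i a) :=
          Fintype.sum_equiv (Equiv.mulRight g) _ _ fun h => rfl
  have hρ'mem : ∀ i, ρ' i ∈ stdSimplex ℝ (C i) := by
    intro i
    constructor
    · intro a
      exact div_nonneg (Finset.sum_nonneg fun g _ => (hρ₀mem _).1 _) hcardG.le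
    · simp only [hρ']
      rw [← Finset.sum_div, Finset.sum_comm]
      have : ∀ g : G, ∑ a, ρ₀ (A.actI g i) (A.sAct base g i a) = 1 := by
        intro g
        rw [Fintype.sum_bijective (A.sAct base g i) (A.sAct_bijective base g i) _ _ fun a => rfl]
        exact (hρ₀mem (A.actI g i)).2
      rw [Finset.sum_congr rfl fun g _ => this g]
      rw [Finset.sum_const, Finset.card_univ, nsmul_eq_mul, mul_one]
      field_simp
  have hρ'stat : ∀ i (t : C i), ∑ r, ρ' i r * P i r t = ρ' i t := by
    intro i t
    have hcalc : ∑ r, ρ' i r * P i r t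
        = (∑ g : G, ∑ r, ρ₀ (A.actI g i) (A.sAct base g i r) * P i r t) / Fintype.card G := by
      calc ∑ r, ρ' i r * P i r t
          = ∑ r, (∑ g : G, ρ₀ (A.actI g i) (A.sAct base g i r) * P i r t) / Fintype.card G := by
            refine Finset.sum_congr rfl fun r _ => ?_
            simp only [hρ']
            rw [div_mul_eq_mul_div, Finset.sum_mul]
        _ = (∑ r, ∑ g : G, ρ₀ (A.actI g i) (A.sAct base g i r) * P i r t) / Fintype.card G := by
            rw [Finset.sum_div]
        _ = (∑ g : G, ∑ r, ρ₀ (A.actI g i) (A.sAct base g i r) * P i r t) / Fintype.card G := by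
            rw [Finset.sum_comm]
    rw [hcalc]
    simp only [hρ']
    congr 1
    refine Finset.sum_congr rfl fun g _ => ?_
    calc ∑ r, ρ₀ (A.actI g i) (A.sAct base g i r) * P i r t
        = ∑ r, ρ₀ (A.actI g i) (A.sAct base g i r)
            * P (A.actI g i) (A.sAct base g i r) (A.sAct base g i t) := by
          refine Finset.sum_congr rfl fun r _ => ?_
          rw [hPequi g i r t]
      _ = ∑ r', ρ₀ (A.actI g i) r' * P (A.actI g i) r' (A.sAct base g i t) :=
          Fintype.sum_bijective (A.sAct base g i) (A.sAct_bijective base g i) _ _ fun r => rfl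
      _ = ρ₀ (A.actI g i) (A.sAct base g i t) := hρ₀stat (A.actI g i) (A.sAct base g i t)
  set π' : (∀ j, C j) → ℝ := fun s => ∏ i, ρ' i (s i) with hπ'
  have hπ'S' : π' ∈ S' := by
    constructor
    · exact ⟨ρ', hρ'mem, hπ'⟩
    · intro g
      funext s
      show ∏ i, ρ' i (A.actS g s i) = ∏ i, ρ' i (s i)
      calc ∏ i, ρ' i (A.actS g s i)
          = ∏ i, ρ' (A.actI g i) (A.actS g s (A.actI g i)) :=
            (Fintype.prod_bijective (A.actI g) (A.actI_bijective g) _ _ fun i => rfl).symm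
        _ = ∏ i, ρ' i (s i) := by
            refine Finset.prod_congr rfl fun i _ => ?_
            rw [A.actS_apply_actI base g s i, hρ'equi g i (s i)]
  have hπ'X : π' ∈ X := subset_convexHull ℝ S' hπ'S'
  -- the final computation: the symmetrized payoff vanishes at π'
  set W : ∀ i, C i → ℝ :=
    fun i a => ∑ s, (if s i = a then u i s * ∏ k ∈ Finset.univ.erase i, ρ' k (s k) else 0)
    with hW
  have hsplit : ∀ (s : ∀ j, C j) (i : I),
      π' s = ρ' i (s i) * ∏ k ∈ Finset.univ.erase i, ρ' k (s k) :=
    fun s i => (Finset.mul_prod_erase Finset.univ _ (Finset.mem_univ i)).symm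
  have claimB : ∀ i (r : C i),
      ∑ s, (if s i = r then u i s * π' s else 0) = ρ' i r * W i r := by
    intro i r
    simp only [hW]
    rw [Finset.mul_sum]
    refine Finset.sum_congr rfl fun s _ => ?_
    by_cases h : s i = r
    · rw [if_pos h, if_pos h, hsplit s i, h]
      ring
    · rw [if_neg h, if_neg h, mul_zero]
  have claimA : ∀ i (r t : C i),
      ∑ s, (if s i = r then u i (Function.update s i t) * π' s else 0) = ρ' i r * W i t := by
    intro i r t
    set σ : (∀ j, C j) → (∀ j, C j) :=
      fun s => Function.update s i (Equiv.swap r t (s i)) with hσ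
    have hσinv : Function.Involutive σ := by
      intro s
      simp only [hσ, Function.update_self, Function.update_idem, Equiv.swap_apply_self,
        Function.update_eq_self]
    have hQ : ∀ s, ∏ k ∈ Finset.univ.erase i, ρ' k (σ s k)
        = ∏ k ∈ Finset.univ.erase i, ρ' k (s k) := by
      intro s
      refine Finset.prod_congr rfl fun k hk => ?_
      simp only [hσ]
      rw [Function.update_of_ne (Finset.ne_of_mem_erase hk)]
    have key : ∀ s : ∀ j, C j,
        (if s i = r then u i (Function.update s i t) * π' s else 0)
          = ρ' i r * (if σ s i = t then u i (σ s) * ∏ k ∈ Finset.univ.erase i, ρ' k (σ s k)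
              else 0) := by
      intro s
      have hσsi : σ s i = Equiv.swap r t (s i) := by
        simp only [hσ, Function.update_self]
      have hcond : σ s i = t ↔ s i = r := by
        rw [hσsi]
        constructor
        · intro hh
          apply (Equiv.swap r t).injective
          rw [Equiv.swap_apply_left]
          exact hh
        · intro hh
          rw [hh, Equiv.swap_apply_left]
      by_cases h : s i = r
      · rw [if_pos h, if_pos (hcond.2 h), hQ s]
        have hσs : σ s = Function.update s i t := by
          simp only [hσ]
          rw [h, Equiv.swap_apply_left]
        rw [hσs, hsplit s i, h]
        ring
      · rw [if_neg h, if_neg (fun hh => h (hcond.1 hh)), mul_zero]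
    rw [Finset.sum_congr rfl fun s _ => key s]
    rw [← Finset.mul_sum]
    congr 1
    calc ∑ s, (if σ s i = t then u i (σ s) * ∏ k ∈ Finset.univ.erase i, ρ' k (σ s k) else 0)
        = ∑ s, (if s i = t then u i s * ∏ k ∈ Finset.univ.erase i, ρ' k (s k) else 0) :=
          Fintype.sum_bijective σ hσinv.bijective _ _ fun s => rfl
      _ = W i t := by simp only [hW]
  have claimD : ∀ i (r t : C i),
      D ⟨i, (r, t)⟩ π' = ρ' i r * W i t - ρ' i r * W i r := by
    intro i r t
    simp only [hD]
    have : ∀ s : ∀ j, C j,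
        (if s i = r then u i (Function.update s i t) - u i s else 0) * π' s
          = (if s i = r then u i (Function.update s i t) * π' s else 0)
            - (if s i = r then u i s * π' s else 0) := by
      intro s; split <;> ring
    rw [Finset.sum_congr rfl fun s _ => this s, Finset.sum_sub_distrib, claimA, claimB]
  -- the total sum vanishes
  have hzero : ∑ j, ybar j * D j π' = 0 := by
    rw [← Finset.univ_sigma_univ, Finset.sum_sigma]
    refine Finset.sum_eq_zero fun i _ => ?_
    rw [Fintype.sum_prod_type]
    have h2 : ∀ r t : C i, ybar ⟨i, (r, t)⟩ * D ⟨i, (r, t)⟩ π'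
        = ybar ⟨i, (r, t)⟩ * (ρ' i r * W i t) - ybar ⟨i, (r, t)⟩ * (ρ' i r * W i r) := by
      intro r t
      rw [claimD]
      ring
    rw [Finset.sum_congr rfl fun r _ => Finset.sum_congr rfl fun t _ => h2 r t]
    rw [Finset.sum_congr rfl fun r (_ : r ∈ Finset.univ) => Finset.sum_sub_distrib _ _,
      Finset.sum_sub_distrib]
    have hsecond : ∑ r, ∑ t, ybar ⟨i, (r, t)⟩ * (ρ' i r * W i r)
        = ∑ r, b i r * (ρ' i r * W i r) := by
      refine Finset.sum_congr rfl fun r _ => ?_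
      rw [← Finset.sum_mul]
    have hfirst : ∑ r, ∑ t, ybar ⟨i, (r, t)⟩ * (ρ' i r * W i t)
        = ∑ r, b i r * (ρ' i r * W i r) := by
      have expand : ∀ r t : C i, ybar ⟨i, (r, t)⟩ * (ρ' i r * W i t)
          = P i r t * (ρ' i r * W i t)
            - (if r = t then (1 - b i r) * (ρ' i r * W i t) else 0) := by
        intro r t
        simp only [hP]
        split <;> ring
      rw [Finset.sum_congr rfl fun r _ => Finset.sum_congr rfl fun t _ => expand r t]
      rw [Finset.sum_congr rfl fun r (_ : r ∈ Finset.univ) => Finset.sum_sub_distrib _ _,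
        Finset.sum_sub_distrib]
      have hS1 : ∑ r, ∑ t, P i r t * (ρ' i r * W i t) = ∑ t, ρ' i t * W i t := by
        rw [Finset.sum_comm]
        refine Finset.sum_congr rfl fun t _ => ?_
        have hh : ∀ r : C i, P i r t * (ρ' i r * W i t) = ρ' i r * P i r t * W i t :=
          fun r => by ring
        rw [Finset.sum_congr rfl fun r _ => hh r, ← Finset.sum_mul, hρ'stat i t]
      have hS2 : ∑ r, ∑ t, (if r = t then (1 - b i r) * (ρ' i r * W i t) else 0)
          = ∑ r, (1 - b i r) * (ρ' i r * W i r) := by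
        refine Finset.sum_congr rfl fun r _ => ?_
        rw [Finset.sum_ite_eq]
        simp
      rw [hS1, hS2, ← Finset.sum_sub_distrib]
      exact Finset.sum_congr rfl fun r _ => by ring
    rw [hfirst, hsecond, sub_self]
  have := hybar_pos π' hπ'X
  rw [hzero] at this
  exact lt_irrefl 0 this
end

section
/- Let a finite group G act on the finite game Γ and let m ∈ ℕ. Then G × S_m acts (as defined) on both powers Γ^{Πm} and Γ^{⊗m}, and the invariant distribution sets satisfy: (i) Δ_{G×S_m}(Γ^{Πm}) = Δ_{G×S_m}(Γ^{⊗m}); (ii) Δ^Π_{G×S_m}(Γ^{Πm}) ⊆ Δ^Π_{G×S_m}(Γ^{⊗m}), with strict inclusion when m ≥ 2; (iii) Δ^X_{G×S_m}(Γ^{Πm}) ⊆ Δ^X_{G×S_m}(Γ^{⊗m}). -/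
open Finset
open scoped Classical BigOperators

/-- The action of `G × S_m` on the common profile set `C^m` of the powers `Γ^{Πm}` and
`Γ^{⊗m}`: `g` is applied in every copy (via the action of `G` on `Γ`) and `σ ∈ S_m`
permutes the copies. -/
def powAct {G : Type*} [Group G] {I : Type*} {C : I → Type*}
    {u : ∀ i : I, (∀ j, C j) → ℝ} (A : GameAction G C u) (m : ℕ)
    (g : G) (σ : Equiv.Perm (Fin m)) (s : ∀ i, Fin m → C i) : ∀ i, Fin m → C i :=
  fun i j => A.actS g (fun k => s k (σ⁻¹ j)) i

/-- The `(G × S_m)`-invariant functions on profiles of the `m`-th powers. -/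
def powInv {G : Type*} [Group G] {I : Type*} {C : I → Type*}
    {u : ∀ i : I, (∀ j, C j) → ℝ} (A : GameAction G C u) (m : ℕ) :
    Set ((∀ i, Fin m → C i) → ℝ) :=
  {π | ∀ (g : G) (σ : Equiv.Perm (Fin m)), (fun s => π (powAct A m g σ s)) = π}

/-- Utility of player `(i,j)` in the `m`-th power `Γ^{Πm}`. -/
noncomputable def uPow {I : Type*} {C : I → Type*}
    (u : ∀ i : I, (∀ j, C j) → ℝ) (m : ℕ) (i : I) (j : Fin m)
    (s : ∀ k, Fin m → C k) : ℝ :=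
  u i (fun k => s k j)

/-- Utility of player `i` in the contracted `m`-th power `Γ^{⊗m}`. -/
noncomputable def uTen {I : Type*} {C : I → Type*}
    (u : ∀ i : I, (∀ j, C j) → ℝ) (m : ℕ) (i : I) (s : ∀ k, Fin m → C k) : ℝ :=
  ∑ j : Fin m, u i (fun k => s k j)

/-- Product distributions of `Γ^{Πm}`: products over all `mn` players `(i,j)`. -/
def prodPow {I : Type*} [Fintype I] (C : I → Type*) [∀ i, Fintype (C i)] (m : ℕ) :
    Set ((∀ i, Fin m → C i) → ℝ) :=
  {π | ∃ ρ : ∀ i, Fin m → C i → ℝ, (∀ i j, ρ i j ∈ stdSimplex ℝ (C i)) ∧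
        π = fun s => ∏ i, ∏ j, ρ i j (s i j)}

/-- Product distributions of `Γ^{⊗m}`: products over the `n` players `i`. -/
def prodTen {I : Type*} [Fintype I] (C : I → Type*) [∀ i, Fintype (C i)] (m : ℕ) :
    Set ((∀ i, Fin m → C i) → ℝ) :=
  {π | ∃ ρ : ∀ i, (Fin m → C i) → ℝ, (∀ i, ρ i ∈ stdSimplex ℝ (Fin m → C i)) ∧
        π = fun s => ∏ i, ρ i (s i)}

/-- Distributions on `C^m` invariant under the action of `G × S_m` on `Γ^{Πm}`. -/
def deltaInvPow {G : Type*} [Group G] {I : Type*} [Fintype I] {C : I → Type*}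
    [∀ i, Fintype (C i)] {u : ∀ i : I, (∀ j, C j) → ℝ}
    (A : GameAction G C u) (m : ℕ) : Set ((∀ i, Fin m → C i) → ℝ) :=
  stdSimplex ℝ (∀ i, Fin m → C i) ∩ powInv A m

/-- Distributions on `C^m` invariant under the action of `G × S_m` on `Γ^{⊗m}`
(the same action on the same profile set). -/
def deltaInvTen {G : Type*} [Group G] {I : Type*} [Fintype I] {C : I → Type*}
    [∀ i, Fintype (C i)] {u : ∀ i : I, (∀ j, C j) → ℝ}
    (A : GameAction G C u) (m : ℕ) : Set ((∀ i, Fin m → C i) → ℝ) :=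
  stdSimplex ℝ (∀ i, Fin m → C i) ∩ powInv A m

section Aux

variable {G : Type*} [Group G] {I : Type*} {C : I → Type*}
    {u : ∀ i : I, (∀ j, C j) → ℝ} (A : GameAction G C u) (m : ℕ)

lemma powAct_one : ∀ s, powAct A m 1 1 s = s := by
  intro s; funext i j
  simp [powAct, A.actS_one]

lemma powAct_mul : ∀ (g h : G) (σ τ : Equiv.Perm (Fin m)) (s : ∀ i, Fin m → C i),
    powAct A m (g * h) (σ * τ) s = powAct A m g σ (powAct A m h τ s) := by
  intro g h σ τ s; funext i j
  simp only [powAct, mul_inv_rev, Equiv.Perm.mul_apply, A.actS_mul]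

lemma powAct_inv (g : G) (σ : Equiv.Perm (Fin m)) (s : ∀ i, Fin m → C i) :
    powAct A m g⁻¹ σ⁻¹ (powAct A m g σ s) = s := by
  rw [← powAct_mul, inv_mul_cancel, inv_mul_cancel, powAct_one]

lemma powAct_const (g : G) (σ : Equiv.Perm (Fin m)) (s : ∀ i, Fin m → C i)
    (h : ∀ i j j', s i j = s i j') :
    ∀ i j j', powAct A m g σ s i j = powAct A m g σ s i j' := by
  intro i j j'
  show A.actS g (fun k => s k (σ⁻¹ j)) i = A.actS g (fun k => s k (σ⁻¹ j')) i
  congr 1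
  funext k
  exact h k _ _

variable {I : Type*} [Fintype I] {C : I → Type*} [∀ i, Fintype (C i)]

lemma prodPow_subset_prodTen : prodPow C m ⊆ prodTen C m := by
  rintro π ⟨ρ, hρ, rfl⟩
  refine ⟨fun i f => ∏ j, ρ i j (f j), fun i => ⟨fun f => Finset.prod_nonneg
    fun j _ => (hρ i j).1 (f j), ?_⟩, rfl⟩
  rw [← Fintype.piFinset_univ, ← Finset.prod_univ_sum]
  exact Finset.prod_eq_one fun j _ => (hρ i j).2

end Aux

/-- `G × S_m` acts on both powers `Γ^{Πm}` and `Γ^{⊗m}` (first six conjuncts: left-action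
laws, diagonality and utility invariance for each power), and the invariant distribution
sets satisfy (i) `Δ_{G×S_m}(Γ^{Πm}) = Δ_{G×S_m}(Γ^{⊗m})`;
(ii) `Δ^Π_{G×S_m}(Γ^{Πm}) ⊆ Δ^Π_{G×S_m}(Γ^{⊗m})`, strictly when `m ≥ 2`;
(iii) `Δ^X_{G×S_m}(Γ^{Πm}) ⊆ Δ^X_{G×S_m}(Γ^{⊗m})`. -/
theorem power_actions_and_distributions
    {G : Type*} [Group G] [Fintype G]
    {I : Type*} [Fintype I] {C : I → Type*} [∀ i, Fintype (C i)]
    (hI : 2 ≤ Fintype.card I) (hC : ∀ i, 2 ≤ Fintype.card (C i))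
    (u : ∀ i : I, (∀ j, C j) → ℝ) (A : GameAction G C u) (m : ℕ) :
    (∀ s, powAct A m 1 1 s = s) ∧
    (∀ (g h : G) (σ τ : Equiv.Perm (Fin m)) (s : ∀ i, Fin m → C i),
      powAct A m (g * h) (σ * τ) s = powAct A m g σ (powAct A m h τ s)) ∧
    (∀ (g : G) (σ : Equiv.Perm (Fin m)) (s t : ∀ i, Fin m → C i) (i : I) (j : Fin m),
      s i j = t i j →
        powAct A m g σ s (A.actI g i) (σ j) = powAct A m g σ t (A.actI g i) (σ j)) ∧
    (∀ (g : G) (σ : Equiv.Perm (Fin m)) (i : I) (j : Fin m) (s : ∀ i, Fin m → C i),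
      uPow u m (A.actI g i) (σ j) (powAct A m g σ s) = uPow u m i j s) ∧
    (∀ (g : G) (σ : Equiv.Perm (Fin m)) (s t : ∀ i, Fin m → C i) (i : I),
      s i = t i → powAct A m g σ s (A.actI g i) = powAct A m g σ t (A.actI g i)) ∧
    (∀ (g : G) (σ : Equiv.Perm (Fin m)) (i : I) (s : ∀ i, Fin m → C i),
      uTen u m (A.actI g i) (powAct A m g σ s) = uTen u m i s) ∧
    deltaInvPow A m = deltaInvTen A m ∧
    prodPow C m ∩ powInv A m ⊆ prodTen C m ∩ powInv A m ∧
    (2 ≤ m → prodPow C m ∩ powInv A m ⊂ prodTen C m ∩ powInv A m) ∧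
    convexHull ℝ (prodPow C m ∩ powInv A m) ⊆
      convexHull ℝ (prodTen C m ∩ powInv A m) := by
  classical
  have hsub : prodPow C m ∩ powInv A m ⊆ prodTen C m ∩ powInv A m :=
    fun π hπ => ⟨prodPow_subset_prodTen m hπ.1, hπ.2⟩
  refine ⟨powAct_one A m, powAct_mul A m, ?_, ?_, ?_, ?_, rfl, hsub, ?_, convexHull_mono hsub⟩
  · -- diagonality for Γ^{Πm}
    intro g σ s t i j h
    show A.actS g (fun k => s k (σ⁻¹ (σ j))) (A.actI g i)
        = A.actS g (fun k => t k (σ⁻¹ (σ j))) (A.actI g i)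
    apply A.diagonal
    simpa using h
  · -- utility invariance for Γ^{Πm}
    intro g σ i j s
    show u (A.actI g i) (fun k => A.actS g (fun k' => s k' (σ⁻¹ (σ j))) k) = u i fun k => s k j
    simp only [Equiv.Perm.inv_def, Equiv.symm_apply_apply]
    exact A.utility_inv g i _
  · -- diagonality for Γ^{⊗m}
    intro g σ s t i h
    funext j
    show A.actS g (fun k => s k (σ⁻¹ j)) (A.actI g i)
        = A.actS g (fun k => t k (σ⁻¹ j)) (A.actI g i)
    apply A.diagonal
    simp [h]
  · -- utility invariance for Γ^{⊗m}
    intro g σ i s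
    show (∑ j, u (A.actI g i) fun k => A.actS g (fun k' => s k' (σ⁻¹ j)) k)
        = ∑ j, u i fun k => s k j
    have h1 : ∀ j : Fin m,
        (u (A.actI g i) fun k => A.actS g (fun k' => s k' (σ⁻¹ j)) k)
          = u i fun k => s k (σ⁻¹ j) := fun j => A.utility_inv g i _
    rw [Finset.sum_congr rfl fun j _ => h1 j]
    exact Equiv.sum_comp (σ⁻¹ : Equiv.Perm (Fin m)) (fun j => u i fun k => s k j)
  · -- strictness for m ≥ 2
    intro hm
    have hne : ∀ i, Nonempty (C i) := fun i => Fintype.card_pos_iff.mp (by have := hC i; omega)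
    have hκpos : ∀ i : I, (0:ℝ) < (Fintype.card (C i) : ℝ)⁻¹ := fun i => by
      have := hC i; positivity
    set j0 : Fin m := ⟨0, by omega⟩ with hj0
    set j1 : Fin m := ⟨1, by omega⟩ with hj1
    have hj01 : j0 ≠ j1 := by simp [hj0, hj1, Fin.ext_iff]
    -- the diagonal product distribution
    set ρ : ∀ i, (Fin m → C i) → ℝ :=
      fun i f => if ∀ j j', f j = f j' then (Fintype.card (C i) : ℝ)⁻¹ else 0 with hρdef
    set π : (∀ i, Fin m → C i) → ℝ := fun s => ∏ i, ρ i (s i) with hπdef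
    have hρnn : ∀ i f, 0 ≤ ρ i f := by
      intro i f; rw [hρdef]; dsimp only; split
      · exact le_of_lt (hκpos i)
      · exact le_rfl
    have hρsum : ∀ i, ∑ f : Fin m → C i, ρ i f = 1 := by
      intro i
      rw [hρdef]; dsimp only
      rw [Finset.sum_ite, Finset.sum_const, Finset.sum_const_zero, add_zero]
      have hcard : (Finset.univ.filter fun f : Fin m → C i => ∀ j j', f j = f j').card
          = Fintype.card (C i) := by
        rw [← Finset.card_univ]
        refine Finset.card_bij (fun f _ => f j0) (fun f _ => Finset.mem_univ _) ?_ ?_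
        · intro f hf f' hf' h
          simp only [Finset.mem_filter] at hf hf'
          funext j
          calc f j = f j0 := hf.2 j j0
          _ = f' j0 := h
          _ = f' j := hf'.2 j0 j
        · intro c _
          exact ⟨fun _ => c, Finset.mem_filter.mpr ⟨Finset.mem_univ _, fun _ _ => rfl⟩, rfl⟩
      rw [hcard, nsmul_eq_mul]
      exact mul_inv_cancel₀ (by have := hC i; positivity)
    -- π is invariant
    have hπinv : π ∈ powInv A m := by
      intro g σ
      funext s
      show π (powAct A m g σ s) = π s
      by_cases h : ∀ i j j', s i j = s i j'
      · have h' := powAct_const A m g σ s h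
        rw [hπdef]; dsimp only
        refine Finset.prod_congr rfl fun i _ => ?_
        rw [hρdef]; dsimp only
        rw [if_pos (fun j j' => h' i j j'), if_pos (fun j j' => h i j j')]
      · push_neg at h
        obtain ⟨i, j, j', hij⟩ := h
        have h2 : ¬ ∀ i j j', powAct A m g σ s i j = powAct A m g σ s i j' := by
          intro hall
          have := powAct_const A m g⁻¹ σ⁻¹ _ hall i j j'
          rw [powAct_inv] at this
          exact hij this
        push_neg at h2
        obtain ⟨i', jj, jj', hij'⟩ := h2
        rw [hπdef]; dsimp only
        rw [Finset.prod_eq_zero (Finset.mem_univ i'), Finset.prod_eq_zero (Finset.mem_univ i)]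
        · rw [hρdef]; dsimp only; rw [if_neg]; push_neg; exact ⟨j, j', hij⟩
        · rw [hρdef]; dsimp only; rw [if_neg]; push_neg; exact ⟨jj, jj', hij'⟩
    have hπten : π ∈ prodTen C m ∩ powInv A m :=
      ⟨⟨ρ, fun i => ⟨fun f => hρnn i f, hρsum i⟩, rfl⟩, hπinv⟩
    -- π is not a product over the players of Γ^{Πm}
    have hπnot : π ∉ prodPow C m := by
      rintro ⟨ρ', hρ', hπ⟩
      have hIne : Nonempty I := Fintype.card_pos_iff.mp (by omega)
      set i0 : I := Classical.arbitrary I with hi0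
      obtain ⟨a, b, hab⟩ := Fintype.exists_pair_of_one_lt_card
        (show 1 < Fintype.card (C i0) by have := hC i0; omega)
      set base : ∀ i, Fin m → C i := fun i _ => Classical.arbitrary (C i) with hbase
      set S : (Fin m → C i0) → (∀ i, Fin m → C i) := fun f => Function.update base i0 f with hS
      -- evaluation of π via its definition
      have hval : ∀ f : Fin m → C i0, π (S f)
          = (if ∀ j j', f j = f j' then (Fintype.card (C i0) : ℝ)⁻¹ else 0)
            * ∏ i ∈ Finset.univ.erase i0, (Fintype.card (C i) : ℝ)⁻¹ := by
        intro f
        rw [hπdef]; dsimp only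
        rw [← Finset.mul_prod_erase Finset.univ _ (Finset.mem_univ i0)]
        congr 1
        · rw [hρdef]; dsimp only
          rw [hS]; dsimp only
          simp only [Function.update_self]
        · refine Finset.prod_congr rfl fun i hi => ?_
          have hne' : i ≠ i0 := (Finset.mem_erase.mp hi).1
          rw [hρdef]; dsimp only
          rw [hS]; dsimp only
          simp only [Function.update_of_ne hne']
          rw [if_pos (fun _ _ => rfl)]
      -- evaluation of π via the assumed product form
      have hval' : ∀ f : Fin m → C i0, π (S f)
          = (∏ j, ρ' i0 j (f j)) * ∏ i ∈ Finset.univ.erase i0, ∏ j, ρ' i j (base i j) := by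
        intro f
        rw [hπ]; dsimp only
        rw [← Finset.mul_prod_erase Finset.univ _ (Finset.mem_univ i0)]
        congr 1
        · refine Finset.prod_congr rfl fun j _ => ?_
          rw [hS]; dsimp only; rw [Function.update_self]
        · refine Finset.prod_congr rfl fun i hi => ?_
          refine Finset.prod_congr rfl fun j _ => ?_
          have hne' : i ≠ i0 := (Finset.mem_erase.mp hi).1
          rw [hS]; dsimp only; rw [Function.update_of_ne hne']
      set fab : Fin m → C i0 := fun j => if j = j0 then a else b with hfab
      set fba : Fin m → C i0 := fun j => if j = j0 then b else a with hfba
      -- the exchange identity for product measures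
      have hex : π (S fab) * π (S fba) = π (S (fun _ => a)) * π (S (fun _ => b)) := by
        rw [hval' fab, hval' fba, hval' (fun _ => a), hval' (fun _ => b)]
        have : (∏ j, ρ' i0 j (fab j)) * (∏ j, ρ' i0 j (fba j))
            = (∏ j, ρ' i0 j a) * (∏ j, ρ' i0 j b) := by
          rw [← Finset.prod_mul_distrib, ← Finset.prod_mul_distrib]
          refine Finset.prod_congr rfl fun j _ => ?_
          rw [hfab, hfba]; dsimp only
          by_cases hj : j = j0
          · rw [if_pos hj, if_pos hj]
          · rw [if_neg hj, if_neg hj, mul_comm]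
        ring_nf
        ring_nf at this
        nlinarith [this]
      have hzero : π (S fab) = 0 := by
        rw [hval fab, if_neg, zero_mul]
        intro hc
        have := hc j0 j1
        rw [hfab] at this; dsimp only at this
        rw [if_pos rfl, if_neg (Ne.symm hj01)] at this
        exact hab this
      have hEpos : (0:ℝ) < ∏ i ∈ Finset.univ.erase i0, (Fintype.card (C i) : ℝ)⁻¹ :=
        Finset.prod_pos fun i _ => hκpos i
      have hpos : 0 < π (S (fun _ => a)) * π (S (fun _ => b)) := by
        rw [hval, hval, if_pos (fun _ _ => rfl), if_pos (fun _ _ => rfl)]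
        positivity
      rw [hzero, zero_mul] at hex
      exact absurd hex.symm (ne_of_gt hpos)
    rw [Set.ssubset_def]
    exact ⟨hsub, fun h => hπnot (h hπten).1⟩
end

section
/- Let a finite group G act on the finite game Γ and let m ∈ ℕ. Identifying Nash equilibria with their associated product distributions in Δ(C^m), the equilibrium sets of the powers satisfy Nash_{G×S_m}(Γ^{Πm}) ⊆ Nash_{G×S_m}(Γ^{⊗m}) ⊆ CE_{G×S_m}(Γ^{⊗m}) ⊆ CE_{G×S_m}(Γ^{Πm}). -/
open Finset
open scoped Classical BigOperators

/-- Correlated equilibria of the `m`-th power `Γ^{Πm}` (on the common profile set `C^m`):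
player `(i,j)` may deviate based on the recommendation `s i j` only. -/
def cePow {I : Type*} [Fintype I] {C : I → Type*} [∀ i, Fintype (C i)]
    (u : ∀ i : I, (∀ j, C j) → ℝ) (m : ℕ) : Set ((∀ i, Fin m → C i) → ℝ) :=
  {π | π ∈ stdSimplex ℝ (∀ i, Fin m → C i) ∧
    ∀ (i : I) (j : Fin m) (r t : C i),
      ∑ s : ∀ k, Fin m → C k,
        (if s i j = r then
          (uPow u m i j (Function.update s i (Function.update (s i) j t)) -
            uPow u m i j s) * π s
         else 0) ≤ 0}

/-- Correlated equilibria of the contracted `m`-th power `Γ^{⊗m}`: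
player `i` may deviate based on the whole recommendation `s i`. -/
def ceTen {I : Type*} [Fintype I] {C : I → Type*} [∀ i, Fintype (C i)]
    (u : ∀ i : I, (∀ j, C j) → ℝ) (m : ℕ) : Set ((∀ i, Fin m → C i) → ℝ) :=
  {π | π ∈ stdSimplex ℝ (∀ i, Fin m → C i) ∧
    ∀ (i : I) (r t : Fin m → C i),
      ∑ s : ∀ k, Fin m → C k,
        (if s i = r then (uTen u m i (Function.update s i t) - uTen u m i s) * π s
         else 0) ≤ 0}

/-- Nash equilibria of `Γ^{Πm}`, identified with their product distributions in `Δ(C^m)`: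
products over all `mn` players from which no player `(i,j)` can profitably deviate. -/
def nashPow {I : Type*} [Fintype I] {C : I → Type*} [∀ i, Fintype (C i)]
    (u : ∀ i : I, (∀ j, C j) → ℝ) (m : ℕ) : Set ((∀ i, Fin m → C i) → ℝ) :=
  {π | ∃ ρ : ∀ i, Fin m → C i → ℝ, (∀ i j, ρ i j ∈ stdSimplex ℝ (C i)) ∧
        (π = fun s => ∏ i, ∏ j, ρ i j (s i j)) ∧
        ∀ (i : I) (j : Fin m) (t : C i),
          ∑ s : ∀ k, Fin m → C k,
              π s * uPow u m i j (Function.update s i (Function.update (s i) j t)) ≤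
            ∑ s : ∀ k, Fin m → C k, π s * uPow u m i j s}

/-- Nash equilibria of `Γ^{⊗m}`, identified with their product distributions in `Δ(C^m)`:
products over the `n` players from which no player `i` can profitably deviate. -/
def nashTen {I : Type*} [Fintype I] {C : I → Type*} [∀ i, Fintype (C i)]
    (u : ∀ i : I, (∀ j, C j) → ℝ) (m : ℕ) : Set ((∀ i, Fin m → C i) → ℝ) :=
  {π | ∃ ρ : ∀ i, (Fin m → C i) → ℝ, (∀ i, ρ i ∈ stdSimplex ℝ (Fin m → C i)) ∧
        (π = fun s => ∏ i, ρ i (s i)) ∧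
        ∀ (i : I) (t : Fin m → C i),
          ∑ s : ∀ k, Fin m → C k, π s * uTen u m i (Function.update s i t) ≤
            ∑ s : ∀ k, Fin m → C k, π s * uTen u m i s}

section Aux
variable {I : Type*} [Fintype I] {C : I → Type*} [∀ i, Fintype (C i)]
  (u : ∀ i : I, (∀ j, C j) → ℝ) (m : ℕ)

lemma pow_aux_uTen_update (i : I) (t : Fin m → C i) (s : ∀ k, Fin m → C k) :
    (∑ j, u i (fun k => Function.update s i t k j)) =
      ∑ j, u i (fun k => Function.update s i (Function.update (s i) j (t j)) k j) := by
  refine Finset.sum_congr rfl fun j _ => ?_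
  congr 1; funext k
  by_cases hk : k = i
  · subst hk; simp
  · simp [Function.update_of_ne hk]

lemma nashPow_subset_nashTen : nashPow u m ⊆ nashTen u m := by
  rintro π ⟨ρ, hρ, hπ, hN⟩
  refine ⟨fun i f => ∏ j, ρ i j (f j),
    fun i => ⟨fun f => Finset.prod_nonneg fun j _ => (hρ i j).1 (f j), ?_⟩, hπ, ?_⟩
  · rw [← Fintype.prod_sum]
    exact Finset.prod_eq_one fun j _ => (hρ i j).2
  · intro i t
    have h1 : ∀ s : ∀ k, Fin m → C k, π s * uTen u m i (Function.update s i t) =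
        ∑ j, π s * uPow u m i j (Function.update s i (Function.update (s i) j (t j))) := by
      intro s
      rw [← Finset.mul_sum]
      congr 1
      exact pow_aux_uTen_update u m i t s
    have h2 : ∀ s : ∀ k, Fin m → C k, π s * uTen u m i s = ∑ j, π s * uPow u m i j s := by
      intro s; rw [← Finset.mul_sum]; rfl
    calc ∑ s : ∀ k, Fin m → C k, π s * uTen u m i (Function.update s i t)
        = ∑ j, ∑ s : ∀ k, Fin m → C k,
            π s * uPow u m i j (Function.update s i (Function.update (s i) j (t j))) := by
          rw [Finset.sum_comm]; exact Finset.sum_congr rfl fun s _ => h1 s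
      _ ≤ ∑ j, ∑ s : ∀ k, Fin m → C k, π s * uPow u m i j s :=
          Finset.sum_le_sum fun j _ => hN i j (t j)
      _ = ∑ s : ∀ k, Fin m → C k, π s * uTen u m i s := by
          rw [Finset.sum_comm]; exact Finset.sum_congr rfl fun s _ => (h2 s).symm

lemma nashTen_subset_ceTen : nashTen u m ⊆ ceTen u m := by
  rintro π ⟨ρ, hρ, hπ, hN⟩
  constructor
  · constructor
    · intro s; rw [hπ]; exact Finset.prod_nonneg fun i _ => (hρ i).1 (s i)
    · rw [hπ, ← Fintype.prod_sum]
      exact Finset.prod_eq_one fun i _ => (hρ i).2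
  · intro i r t
    set e := Equiv.piSplitAt i (fun k => Fin m → C k) with he
    have hei : ∀ (c : Fin m → C i) w, e.symm (c, w) i = c := by
      intro c w; simp [he]
    have heu : ∀ (c t' : Fin m → C i) w,
        Function.update (e.symm (c, w)) i t' = e.symm (t', w) := by
      intro c t' w
      funext k
      by_cases hk : k = i
      · subst hk; simp [he]
      · simp [he, Function.update_of_ne hk, hk]
    set Q : (∀ k : {k // k ≠ i}, Fin m → C k) → ℝ :=
      fun w => ∏ k : {k // k ≠ i}, ρ k (w k) with hQ
    have hQnn : ∀ w, 0 ≤ Q w := fun w => Finset.prod_nonneg fun k _ => (hρ k).1 (w k)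
    have hπQ : ∀ (c : Fin m → C i) w, π (e.symm (c, w)) = ρ i c * Q w := by
      intro c w
      simp only [hπ]
      rw [Fintype.prod_eq_mul_prod_compl i (fun k => ρ k (e.symm (c, w) k))]
      congr 1
      · rw [hei]
      · rw [Finset.prod_subtype (p := fun k => k ≠ i) (({i}ᶜ : Finset I)) (fun k => by simp)
            (fun k => ρ k (e.symm (c, w) k))]
        refine Finset.prod_congr rfl fun k _ => ?_
        congr 1
        simp [he, k.prop]
    -- reindex sums along e.symm
    have hre : ∀ F : (∀ k, Fin m → C k) → ℝ,
        ∑ s : ∀ k, Fin m → C k, F s = ∑ c : Fin m → C i, ∑ w, F (e.symm (c, w)) := by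
      intro F
      rw [← Equiv.sum_comp e.symm F, Fintype.sum_prod_type]
    set W : (Fin m → C i) → ℝ := fun c => ∑ w, Q w * uTen u m i (e.symm (c, w)) with hW
    have hF : ∀ t' : Fin m → C i,
        (∑ s : ∀ k, Fin m → C k, π s * uTen u m i (Function.update s i t')) = W t' := by
      intro t'
      rw [hre]
      have : ∀ (c : Fin m → C i),
          (∑ w, π (e.symm (c, w)) * uTen u m i (Function.update (e.symm (c, w)) i t'))
            = ρ i c * W t' := by
        intro c
        rw [hW, Finset.mul_sum]
        refine Finset.sum_congr rfl fun w _ => ?_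
        rw [hπQ, heu]; ring
      calc (∑ c : Fin m → C i, ∑ w,
              π (e.symm (c, w)) * uTen u m i (Function.update (e.symm (c, w)) i t'))
          = ∑ c : Fin m → C i, ρ i c * W t' := Finset.sum_congr rfl fun c _ => this c
        _ = W t' := by rw [← Finset.sum_mul, (hρ i).2, one_mul]
    have hE : (∑ s : ∀ k, Fin m → C k, π s * uTen u m i s) = ∑ c : Fin m → C i, ρ i c * W c := by
      rw [hre]
      refine Finset.sum_congr rfl fun c _ => ?_
      rw [hW, Finset.mul_sum]
      refine Finset.sum_congr rfl fun w _ => ?_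
      rw [hπQ]; ring
    set E : ℝ := ∑ c : Fin m → C i, ρ i c * W c with hEdef
    have hWle : ∀ c, W c ≤ E := by
      intro c
      rw [← hF c]
      calc (∑ s : ∀ k, Fin m → C k, π s * uTen u m i (Function.update s i c))
          ≤ ∑ s : ∀ k, Fin m → C k, π s * uTen u m i s := hN i c
        _ = E := hE
    -- the CE sum equals ρ i r * (W t - W r)
    have hsum : (∑ s : ∀ k, Fin m → C k,
        (if s i = r then (uTen u m i (Function.update s i t) - uTen u m i s) * π s else 0))
          = ρ i r * (W t - W r) := by
      rw [hre]
      have hrow : ∀ c : Fin m → C i,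
          (∑ w, (if e.symm (c, w) i = r then
            (uTen u m i (Function.update (e.symm (c, w)) i t) - uTen u m i (e.symm (c, w)))
              * π (e.symm (c, w)) else 0))
          = if c = r then
              ρ i r * (∑ w, Q w * uTen u m i (e.symm (t, w)) - ∑ w, Q w * uTen u m i (e.symm (c, w)))
            else 0 := by
        intro c
        by_cases hc : c = r
        · rw [if_pos hc]
          subst hc
          rw [mul_sub, Finset.mul_sum, Finset.mul_sum, ← Finset.sum_sub_distrib]
          refine Finset.sum_congr rfl fun w _ => ?_
          rw [if_pos (hei c w), hπQ, heu]
          ring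
        · rw [if_neg hc]
          refine Finset.sum_eq_zero fun w _ => ?_
          rw [hei, if_neg hc]
      calc (∑ c : Fin m → C i, ∑ w, (if e.symm (c, w) i = r then
            (uTen u m i (Function.update (e.symm (c, w)) i t) - uTen u m i (e.symm (c, w)))
              * π (e.symm (c, w)) else 0))
          = ∑ c : Fin m → C i, (if c = r then
              ρ i r * (∑ w, Q w * uTen u m i (e.symm (t, w)) - ∑ w, Q w * uTen u m i (e.symm (c, w)))
            else 0) := Finset.sum_congr rfl fun c _ => hrow c
        _ = ρ i r * (W t - W r) := by
            rw [Finset.sum_ite_eq' Finset.univ r]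
            simp [hW]
    rw [hsum]
    rcases eq_or_lt_of_le ((hρ i).1 r) with h0 | hpos
    · rw [← h0, zero_mul]
    · have hWr : E ≤ W r := by
        by_contra hlt
        push_neg at hlt
        have hstrict : (∑ c : Fin m → C i, ρ i c * W c) < ∑ c : Fin m → C i, ρ i c * E :=
          Finset.sum_lt_sum
            (fun c _ => mul_le_mul_of_nonneg_left (hWle c) ((hρ i).1 c))
            ⟨r, Finset.mem_univ r, mul_lt_mul_of_pos_left hlt hpos⟩
        rw [← Finset.sum_mul, (hρ i).2, one_mul, ← hEdef] at hstrict
        exact lt_irrefl E hstrict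
      have : W t - W r ≤ 0 := sub_nonpos.2 (le_trans (hWle t) hWr)
      exact mul_nonpos_of_nonneg_of_nonpos (le_of_lt hpos) this

lemma ceTen_subset_cePow : ceTen u m ⊆ cePow u m := by
  rintro π ⟨hs, hCE⟩
  refine ⟨hs, fun i j r t => ?_⟩
  have key : ∀ s : ∀ k, Fin m → C k,
      uTen u m i (Function.update s i (Function.update (s i) j t)) - uTen u m i s
        = uPow u m i j (Function.update s i (Function.update (s i) j t)) - uPow u m i j s := by
    intro s
    show (∑ j', u i (fun k => Function.update s i (Function.update (s i) j t) k j'))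
        - (∑ j', u i (fun k => s k j')) = _
    rw [← Finset.sum_sub_distrib]
    refine Finset.sum_eq_single_of_mem j (Finset.mem_univ j) fun j' _ hj' => ?_
    have harg : (fun k => Function.update s i (Function.update (s i) j t) k j')
        = fun k => s k j' := by
      funext k
      by_cases hk : k = i
      · subst hk; simp [Function.update_of_ne hj']
      · simp [Function.update_of_ne hk]
    rw [harg, sub_self]
  have swap : (∑ s : ∀ k, Fin m → C k,
      (if s i j = r then
        (uPow u m i j (Function.update s i (Function.update (s i) j t)) - uPow u m i j s)
          * π s else 0))
      = ∑ f : Fin m → C i, ∑ s : ∀ k, Fin m → C k,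
          (if s i = f then (if f j = r then
            (uPow u m i j (Function.update s i (Function.update (s i) j t)) - uPow u m i j s)
              * π s else 0) else 0) := by
    rw [Finset.sum_comm]
    refine Finset.sum_congr rfl fun s _ => ?_
    rw [Finset.sum_ite_eq]
    simp
  rw [swap]
  refine Finset.sum_nonpos fun f _ => ?_
  by_cases hf : f j = r
  · refine le_trans (le_of_eq ?_) (hCE i f (Function.update f j t))
    refine Finset.sum_congr rfl fun s _ => ?_
    by_cases hs' : s i = f
    · subst hs'
      rw [if_pos rfl, if_pos rfl, if_pos hf, key s]
    · rw [if_neg hs', if_neg hs']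
  · refine le_of_eq (Finset.sum_eq_zero fun s _ => ?_)
    by_cases hs' : s i = f
    · rw [if_pos hs', if_neg hf]
    · rw [if_neg hs']

end Aux

/-- Inclusions between the `(G×S_m)`-invariant equilibrium sets of the two `m`-th powers
(Nash equilibria identified with their product distributions in `Δ(C^m)`):
`Nash_{G×S_m}(Γ^{Πm}) ⊆ Nash_{G×S_m}(Γ^{⊗m}) ⊆ CE_{G×S_m}(Γ^{⊗m}) ⊆ CE_{G×S_m}(Γ^{Πm})`. -/
theorem power_equilibrium_inclusions
    {G : Type*} [Group G] [Fintype G]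
    {I : Type*} [Fintype I] {C : I → Type*} [∀ i, Fintype (C i)]
    (hI : 2 ≤ Fintype.card I) (hC : ∀ i, 2 ≤ Fintype.card (C i))
    (u : ∀ i : I, (∀ j, C j) → ℝ) (A : GameAction G C u) (m : ℕ) :
    nashPow u m ∩ powInv A m ⊆ nashTen u m ∩ powInv A m ∧
    nashTen u m ∩ powInv A m ⊆ ceTen u m ∩ powInv A m ∧
    ceTen u m ∩ powInv A m ⊆ cePow u m ∩ powInv A m :=
  ⟨fun π hπ => ⟨nashPow_subset_nashTen u m hπ.1, hπ.2⟩,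
   fun π hπ => ⟨nashTen_subset_ceTen u m hπ.1, hπ.2⟩,
   fun π hπ => ⟨ceTen_subset_cePow u m hπ.1, hπ.2⟩⟩
end

section
/- If Γ is a finite game on which a finite group G acts, then G × S_n acts player transitively on the symmetrization Γ^Sym, where σ ∈ S_n acts by σ⋆(s^1,…,s^n) = (s^{σ^{-1}(1)},…,s^{σ^{-1}(n)}) (and σ⋆i = σ(i) on players) and g ∈ G acts by g⋆(s^1,…,s^n) = (g·s^1,…,g·s^n) (fixing each player); in particular the utilities of Γ^Sym are invariant: u^Sym_{h⋆i}(h⋆s) = u^Sym_i(s) for all h ∈ G × S_n. -/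
open Finset
open scoped Classical BigOperators

/-- The utilities of the symmetrization `Γ^Sym` of an `n`-player game `Γ`: each of the
`n` players picks a full strategy profile of `Γ`, and `n!` copies of `Γ` are played, one
for each assignment `τ` of players of `Γ^Sym` to roles in `Γ`:
`u_i^Sym(s) = ∑_{τ ∈ S_n} u_{τ(i)}(d(τ⋆s))`, where `(τ⋆s)^k = s^{τ⁻¹(k)}` and
`d(s)_k = s^k_k`. -/
noncomputable def uSym {I : Type*} [Fintype I] [DecidableEq I] {C : I → Type*}
    [∀ i, Fintype (C i)] (u : ∀ i : I, (∀ j, C j) → ℝ)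
    (i : I) (s : I → ∀ j, C j) : ℝ :=
  ∑ τ : Equiv.Perm I, u (τ i) (fun k => s (τ⁻¹ k) k)

def GameAction.perm {G : Type*} [Group G] {I : Type*} {C : I → Type*}
    {u : ∀ i : I, (∀ j, C j) → ℝ} (A : GameAction G C u) (g : G) : Equiv.Perm I where
  toFun := A.actI g
  invFun := A.actI g⁻¹
  left_inv := fun i => by rw [← A.actI_mul]; simp [A.actI_one]
  right_inv := fun i => by rw [← A.actI_mul]; simp [A.actI_one]

lemma uSym_inv {G : Type*} [Group G] {I : Type*} [Fintype I] [DecidableEq I]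
    {C : I → Type*} [∀ i, Fintype (C i)] {u : ∀ i : I, (∀ j, C j) → ℝ}
    (A : GameAction G C u) (g : G) (σ : Equiv.Perm I) (i : I) (s : I → ∀ j, C j) :
    uSym u (σ i) (fun k => A.actS g (s (σ⁻¹ k))) = uSym u i s := by
  unfold uSym
  set pg := A.perm g with hpg
  refine Fintype.sum_equiv ((Equiv.mulLeft pg⁻¹).trans (Equiv.mulRight σ)) _ _ (fun τ => ?_)
  simp only [Equiv.trans_apply, Equiv.coe_mulLeft, Equiv.coe_mulRight]
  set q : ∀ m, C m := fun m => s (σ⁻¹ (τ⁻¹ (pg m))) m with hq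
  have h1 : (fun k => A.actS g (s (σ⁻¹ (τ⁻¹ k))) k) = A.actS g q := by
    funext k
    obtain ⟨m, rfl⟩ : ∃ m, A.actI g m = k := ⟨pg⁻¹ k, pg.apply_symm_apply k⟩
    exact A.diagonal g _ q m rfl
  have h2 : u (τ (σ i)) (A.actS g q) = u (pg⁻¹ (τ (σ i))) q := by
    have := A.utility_inv g (pg⁻¹ (τ (σ i))) q
    rwa [show A.actI g (pg⁻¹ (τ (σ i))) = τ (σ i) from pg.apply_symm_apply _] at this
  rw [h1, h2]
  congr 1
  all_goals simp [hq, Equiv.Perm.mul_apply, mul_inv_rev]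

/-- If a finite group `G` acts on `Γ`, then `G × S_n` acts player transitively on the
symmetrization `Γ^Sym`, where `σ ∈ S_n` acts by permuting the players (`σ⋆i = σ(i)`,
`(σ⋆s)^k = s^{σ⁻¹(k)}`) and `g ∈ G` acts diagonally (`g⋆(s¹,…,sⁿ) = (g·s¹,…,g·sⁿ)`,
fixing each player); in particular the utilities of `Γ^Sym` are invariant (part of the
`GameAction` structure). -/
theorem symmetrization_player_transitive_action
    {G : Type*} [Group G] [Fintype G]
    {I : Type*} [Fintype I] [DecidableEq I] {C : I → Type*} [∀ i, Fintype (C i)]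
    (hI : 2 ≤ Fintype.card I) (hC : ∀ i, 2 ≤ Fintype.card (C i))
    (u : ∀ i : I, (∀ j, C j) → ℝ) (A : GameAction G C u) :
    ∃ B : GameAction (G × Equiv.Perm I) (fun _ : I => ∀ j, C j) (uSym u),
      B.actI = (fun h i => h.2 i) ∧
      B.actS = (fun h s k => A.actS h.1 (s (h.2⁻¹ k))) ∧
      ∀ i j : I, ∃ h : G × Equiv.Perm I, B.actI h i = j := by
  refine ⟨{ actI := fun h i => h.2 i
            actS := fun h s k => A.actS h.1 (s (h.2⁻¹ k))
            actI_one := fun i => rfl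
            actI_mul := fun g h i => rfl
            actS_one := fun s => by funext k; simp [A.actS_one]
            actS_mul := fun g h s => by
              funext k
              simp [A.actS_mul, Equiv.Perm.mul_apply, mul_inv_rev]
            diagonal := fun h s t i hst => by
              simp only [Equiv.Perm.coe_inv, Equiv.symm_apply_apply, hst]
            utility_inv := fun h i s => uSym_inv A h.1 h.2 i s },
          rfl, rfl, fun i j => ⟨(1, Equiv.swap i j), Equiv.swap_apply_left i j⟩⟩
end
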